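/- arXiv:2206.11583 — 3 statements merged into one kernel-verified Lean document; each statement's English description precedes it below -/
import Mathlib

section
/- Fix ψ ≥ 0, Gc > 0, l > 0, α > 0, d ∈ ℝ, and a previous-step phase-field value φₙ with φₙ ≤ 1. Then the clamped value φ̄ = min( max( (2ψ + αd − 3Gc/(8l))/(2ψ + α), φₙ ), 1 ) is the unique minimizer of the AT1 local micromorphic energy density f over the interval [φₙ, 1]; that is, f(φ̄) ≤ f(x) for all x ∈ [φₙ, 1], with equality only when x = φ̄. -/
/-- The clamped AT1 local phase-field value is the unique minimizer of the AT1
local micromorphic energy density over the irreversibility interval `[φₙ, 1]`. -/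
theorem at1_clamped_unique_minimizer
    (ψ Gc l α d φn : ℝ) (hψ : 0 ≤ ψ) (hGc : 0 < Gc) (hl : 0 < l) (hα : 0 < α)
    (hφn : φn ≤ 1) :
    let f : ℝ → ℝ := fun φ => (1 - φ) ^ 2 * ψ + (3 * Gc / (8 * l)) * φ + (α / 2) * (φ - d) ^ 2
    let φbar : ℝ := min (max ((2 * ψ + α * d - 3 * Gc / (8 * l)) / (2 * ψ + α)) φn) 1
    φbar ∈ Set.Icc φn 1 ∧
    (∀ x ∈ Set.Icc φn 1, f φbar ≤ f x) ∧
    (∀ x ∈ Set.Icc φn 1, f φbar = f x → x = φbar) := by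
  intro f φbar
  have hc : (0:ℝ) < 2 * ψ + α := by linarith
  set m : ℝ := (2 * ψ + α * d - 3 * Gc / (8 * l)) / (2 * ψ + α) with hmdef
  have hm' : (2 * ψ + α) * m = 2 * ψ + α * d - 3 * Gc / (8 * l) := by
    rw [hmdef]; field_simp
  have hbm : φbar = min (max m φn) 1 := rfl
  clear_value m
  clear hmdef
  have key : ∀ x y : ℝ, f x - f y = (ψ + α / 2) * ((x - y) * (x + y - 2 * m)) := by
    intro x y
    simp only [f]
    linear_combination (x - y) * hm'
  have hmem : φbar ∈ Set.Icc φn 1 :=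
    ⟨le_min (le_max_right _ _) hφn, min_le_right _ _⟩
  have hstrict : ∀ x : ℝ, φn ≤ x → x ≤ 1 → x ≠ φbar →
      0 < (x - φbar) * (x + φbar - 2 * m) := by
    intro x hx1 hx2 hne
    rcases le_or_gt (max m φn) 1 with h1 | h1
    · have hb : φbar = max m φn := by rw [hbm, min_eq_left h1]
      rcases le_total m φn with hm2 | hm2
      · have hb' : φbar = φn := by rw [hb, max_eq_right hm2]
        have hxb : φbar < x := by
          rcases lt_or_eq_of_le (hb' ▸ hx1 : φbar ≤ x) with h | h
          · exact h
          · exact absurd h.symm hne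
        have h2 : x - φbar ≤ x + φbar - 2 * m := by rw [hb']; linarith
        exact mul_pos (sub_pos.mpr hxb) (lt_of_lt_of_le (sub_pos.mpr hxb) h2)
      · have hb' : φbar = m := by rw [hb, max_eq_left hm2]
        have hne' : x ≠ m := hb' ▸ hne
        have h0 : (0:ℝ) < (x - m) ^ 2 := by
          have : x - m ≠ 0 := sub_ne_zero.mpr hne'
          positivity
        rw [hb']; nlinarith
    · have hm1 : 1 < m := by
        rcases lt_max_iff.mp h1 with h | h
        · exact h
        · exact absurd h (not_lt.mpr hφn)
      have hb' : φbar = 1 := by rw [hbm, min_eq_right (le_of_lt h1)]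
      have hx1' : x < 1 := by
        rcases lt_or_eq_of_le hx2 with h | h
        · exact h
        · exact absurd (h.trans hb'.symm) hne
      rw [hb']
      have : 0 < (1 - x) * (2 * m - x - 1) :=
        mul_pos (by linarith) (by linarith)
      nlinarith
  refine ⟨hmem, ?_, ?_⟩
  · intro x hx
    rcases eq_or_ne x φbar with rfl | hne
    · exact le_refl _
    · have h := hstrict x hx.1 hx.2 hne
      have hkey := key x φbar
      have hp := mul_pos (show (0:ℝ) < ψ + α / 2 by linarith) h
      have hlt : f φbar < f x := sub_pos.mp (by rw [hkey]; exact hp)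
      exact hlt.le
  · intro x hx heq
    by_contra hne
    have h := hstrict x hx.1 hx.2 hne
    have hkey := key x φbar
    have hp := mul_pos (show (0:ℝ) < ψ + α / 2 by linarith) h
    have hlt : f φbar < f x := sub_pos.mp (by rw [hkey]; exact hp)
    exact absurd heq (ne_of_lt hlt)
end

section
/- Fix ψ ≥ 0, Gc > 0, l > 0, α > 0, d ∈ ℝ, and φₙ with φₙ ≤ 1, and let φ̄ = min( max( (2ψ + αd)/(2ψ + α + Gc/l), φₙ ), 1 ). Then φₙ ≤ φ̄ ≤ 1 (so fracture irreversibility and the bound φ ≤ 1 hold exactly), and φ̄ satisfies the pointwise variational inequality ( −2(1−φ̄)ψ + (Gc/l)·φ̄ + α(φ̄ − d) ) · (φ̂ − φ̄) ≥ 0 for every φ̂ ∈ [φₙ, 1]. -/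
/-!
Since `f` is a quadratic with positive curvature `A = 2ψ + α + Gc/l`, its derivative is
`f′(φ) = A (φ − φ⋆)` with `φ⋆ = (2ψ + αd)/A` the unconstrained minimiser. The value `φ̄` is the
projection of `φ⋆` onto `[φₙ, 1]`, and `(φ̄ − φ⋆)(φ̂ − φ̄) ≥ 0` is the variational characterisation
of projection onto an interval.
-/

open Set

theorem clamp_sub_mul_sub_clamp_nonneg {s lo hi x : ℝ} (hx : x ∈ Icc lo hi) :
    0 ≤ (min (max s lo) hi - s) * (x - min (max s lo) hi) := by
  rcases le_total s lo with hs | hs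
  · rw [max_eq_right hs, min_eq_left (hx.1.trans hx.2)]
    exact mul_nonneg (sub_nonneg.2 hs) (sub_nonneg.2 hx.1)
  rcases le_total s hi with hs' | hs'
  · simp [max_eq_left hs, min_eq_left hs']
  · rw [max_eq_left hs, min_eq_right hs']
    exact mul_nonneg_of_nonpos_of_nonpos (sub_nonpos.2 hs') (sub_nonpos.2 hx.2)

theorem at2_deriv_eq_mul_sub_minimizer (ψ Gc l α d φ : ℝ) (hA : 2 * ψ + α + Gc / l ≠ 0) :
    -2 * (1 - φ) * ψ + (Gc / l) * φ + α * (φ - d) =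
      (2 * ψ + α + Gc / l) * (φ - (2 * ψ + α * d) / (2 * ψ + α + Gc / l)) := by
  rw [mul_sub (2 * ψ + α + Gc / l), mul_div_cancel₀ _ hA]
  ring

/-- The clamped AT2 local phase-field value satisfies the irreversibility bounds
`φₙ ≤ φ̄ ≤ 1` and the pointwise variational inequality
`f′(φ̄)(φ̂ − φ̄) ≥ 0` for every admissible `φ̂ ∈ [φₙ, 1]`. -/
theorem at2_clamped_variational_inequality
    (ψ Gc l α d φn : ℝ) (hψ : 0 ≤ ψ) (hGc : 0 < Gc) (hl : 0 < l) (hα : 0 < α)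
    (hφn : φn ≤ 1) :
    let φbar : ℝ := min (max ((2 * ψ + α * d) / (2 * ψ + α + Gc / l)) φn) 1
    (φn ≤ φbar ∧ φbar ≤ 1) ∧
    (∀ φhat ∈ Set.Icc φn 1,
      (-2 * (1 - φbar) * ψ + (Gc / l) * φbar + α * (φbar - d)) * (φhat - φbar) ≥ 0) := by
  intro φbar
  have hA : 0 < 2 * ψ + α + Gc / l := by positivity
  refine ⟨⟨le_min (le_max_right _ _) hφn, min_le_right _ _⟩, fun φhat hφhat => ?_⟩
  rw [at2_deriv_eq_mul_sub_minimizer ψ Gc l α d φbar hA.ne', mul_assoc]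
  exact mul_nonneg hA.le (clamp_sub_mul_sub_clamp_nonneg hφhat)
end

section
/- For all K ∈ ℝ, the residual strain energy density Ψ⁻ : ε ↦ (K/2)·⟨tr ε⟩₋², viewed as a function on the space of 3×3 real matrices, is Fréchet differentiable at every matrix ε, and its derivative is the linear map X ↦ ⟨σ⁻(ε), X⟩ = K·⟨tr ε⟩₋·tr X; that is, σ⁻ = ∂Ψ⁻/∂ε. -/
open Matrix

attribute [local instance] Matrix.frobeniusNormedAddCommGroup Matrix.frobeniusNormedSpace

lemma sq_min_hasDerivAt (t : ℝ) :
    HasDerivAt (fun x : ℝ => (min x 0) ^ 2) (2 * min t 0) t := by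
  rcases lt_trichotomy t 0 with ht | ht | ht
  · have h : HasDerivAt (fun x : ℝ => x ^ 2) (2 * t) t := by
      simpa using (hasDerivAt_pow 2 t)
    have hmin : min t 0 = t := min_eq_left ht.le
    rw [hmin]
    refine h.congr_of_eventuallyEq ?_
    filter_upwards [eventually_lt_nhds ht] with x hx
    rw [min_eq_left hx.le]
  · subst ht
    rw [min_self, mul_zero]
    rw [hasDerivAt_iff_isLittleO, Asymptotics.isLittleO_iff]
    intro c hc
    filter_upwards [Metric.ball_mem_nhds (0:ℝ) hc] with x hx
    simp only [Metric.mem_ball, Real.dist_eq, sub_zero] at hx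
    have h1 : |min x 0| ≤ |x| := by
      rcases le_total x 0 with h | h
      · rw [min_eq_left h]
      · rw [min_eq_right h]; simp [abs_nonneg]
    simp only [sub_zero, smul_zero, min_self, ne_eq, Real.norm_eq_abs]
    have h2 : |min x 0 ^ 2 - 0 ^ 2| ≤ |x| * |x| := by
      rw [zero_pow two_ne_zero, sub_zero, sq, abs_mul]
      exact mul_le_mul h1 h1 (abs_nonneg _) (abs_nonneg _)
    nlinarith [abs_nonneg x]
  · have h : HasDerivAt (fun _ : ℝ => (0:ℝ)) 0 t := hasDerivAt_const t 0
    have hmin : min t 0 = 0 := min_eq_right ht.le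
    rw [hmin, mul_zero]
    refine h.congr_of_eventuallyEq ?_
    filter_upwards [eventually_gt_nhds ht] with x hx
    rw [min_eq_right hx.le]; norm_num

/-- The Amor residual strain energy density `Ψ⁻(ε) = (K/2)⟨tr ε⟩₋²` is Fréchet
differentiable at every `ε`, with derivative `X ↦ ⟨σ⁻(ε), X⟩ = K⟨tr ε⟩₋ tr X`. -/
theorem amor_psi_minus_fderiv
    (K : ℝ) (ε : Matrix (Fin 3) (Fin 3) ℝ) :
    let Ψminus : Matrix (Fin 3) (Fin 3) ℝ → ℝ := fun e => (K / 2) * (min e.trace 0) ^ 2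
    DifferentiableAt ℝ Ψminus ε ∧
    ∀ X : Matrix (Fin 3) (Fin 3) ℝ,
      fderiv ℝ Ψminus ε X = K * min ε.trace 0 * X.trace := by
  intro Ψminus
  set L := (Matrix.traceLinearMap (Fin 3) ℝ ℝ).toContinuousLinearMap with hL
  have htr : HasFDerivAt (fun e : Matrix (Fin 3) (Fin 3) ℝ => e.trace) L ε :=
    L.hasFDerivAt
  have h := ((sq_min_hasDerivAt ε.trace).comp_hasFDerivAt ε htr).const_mul (K / 2)
  have h' : HasFDerivAt Ψminus ((K / 2) • (2 * (ε.trace ⊓ 0)) • L) ε := h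
  refine ⟨h'.differentiableAt, fun X => ?_⟩
  rw [h'.fderiv]
  simp [hL, Matrix.traceLinearMap]
  ring
end
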